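/- arXiv:1003.5552 — 2 statements merged into one kernel-verified Lean document; each statement's English description precedes it below -/
import Mathlib

section
/- In a temporal doctrine, for any map f : X → Y the restricted Frobenius law holds at the level of closed parts: ∃_f(M ∧_X f• j_Y B) ≅ ∃_f M ∧_Y j_Y B naturally, where ∃_f := ⋄_Y Σ_f i_X is left adjoint to f• : MY → MX. -/
noncomputable section

open CategoryTheory CategoryTheory.Limits MonoidalCategory

universe v u

/-- `CartesianClosed` with its meaning in the older Mathlib: monoidal closedness for the monoidal
structure induced by (the chosen limits of) `HasFiniteProducts`. -/
abbrev CartesianClosed (C : Type u) [Category.{v} C] [HasFiniteProducts C] :=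
  @MonoidalClosed C _ (CartesianMonoidalCategory.ofHasFiniteProducts (C := C)).toMonoidalCategory

variable {PX : Type u} [Category.{v} PX] {PY : Type u} [Category.{v} PY]
  {MX : Type u} [Category.{v} MX] {MY : Type u} [Category.{v} MY]
  {M'X : Type u} [Category.{v} M'X] {M'Y : Type u} [Category.{v} M'Y]
  {BY : Type u} [Category.{v} BY]
  [CartesianMonoidalCategory PX] [CartesianClosed PX]
  [CartesianMonoidalCategory PY] [CartesianClosed PY]

/-- The canonical comparison map `⋄(Q × i' N) ⟶ ⋄(i ⋄ Q × i' N)` induced by the unit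
of `⋄ ⊣ i`; the mixed Frobenius law says it is an isomorphism. -/
def mixedFrobMap {P M M' : Type u} [Category.{v} P] [Category.{v} M] [Category.{v} M']
    [CartesianMonoidalCategory P]
    (i : M ⥤ P) (i' : M' ⥤ P) (dm : P ⥤ M) (adj : dm ⊣ i) :
    ((𝟭 P).prod i' ⋙ MonoidalCategory.tensor P ⋙ dm) ⟶
      ((dm ⋙ i).prod i' ⋙ MonoidalCategory.tensor P ⋙ dm) :=
  Functor.whiskerRight (Functor.whiskerRight (NatTrans.prod adj.unit (𝟙 i')) (MonoidalCategory.tensor P)) dm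

/-- The product (wedge) of the category of left closed parts, `L ∧ M := ⋄(i L × i M)`. -/
def wedge {P M : Type u} [Category.{v} P] [Category.{v} M] [CartesianMonoidalCategory P]
    (i : M ⥤ P) (dm : P ⥤ M) : M × M ⥤ M :=
  i.prod i ⋙ MonoidalCategory.tensor P ⋙ dm

/-- In a temporal doctrine, for any map `f : X ⟶ Y` the restricted
Frobenius law holds at the level of closed parts:
`∃_f (M ∧_X f• (j_Y B)) ≅ ∃_f M ∧_Y j_Y B` naturally, where `∃_f := ⋄_Y Σ_f i_X` is
left adjoint to `f• : M Y ⥤ M X`. -/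
theorem statement14
    (iX : MX ⥤ PX) (i'X : M'X ⥤ PX) (iY : MY ⥤ PY) (i'Y : M'Y ⥤ PY)
    [iX.Full] [iX.Faithful] [i'X.Full] [i'X.Faithful]
    [iY.Full] [iY.Faithful] [i'Y.Full] [i'Y.Faithful]
    (dmX sqX : PX ⥤ MX) (dm'X sq'X : PX ⥤ M'X)
    (dmY sqY : PY ⥤ MY) (dm'Y sq'Y : PY ⥤ M'Y)
    (adjDmX : dmX ⊣ iX) (adjSqX : iX ⊣ sqX) (adjDm'X : dm'X ⊣ i'X) (adjSq'X : i'X ⊣ sq'X)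
    (adjDmY : dmY ⊣ iY) (adjSqY : iY ⊣ sqY) (adjDm'Y : dm'Y ⊣ i'Y) (adjSq'Y : i'Y ⊣ sq'Y)
    -- substitution `f*` with left adjoint `Σ_f` satisfying the Frobenius law
    (subf : PY ⥤ PX) (sigf : PX ⥤ PY) (adjSig : sigf ⊣ subf)
    (frob : Nonempty (((𝟭 PX).prod subf ⋙ MonoidalCategory.tensor PX ⋙ sigf) ≅
        (sigf.prod (𝟭 PY) ⋙ MonoidalCategory.tensor PY)))
    -- substitution `f•` on left closed parts, compatible with `f*`
    (fdot : MY ⥤ MX) (compat : fdot ⋙ iX ≅ iY ⋙ subf)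
    -- the bi-closed parts of `Y`
    (jY : BY ⥤ MY) (j'Y : BY ⥤ M'Y) (jcomm : jY ⋙ iY ≅ j'Y ⋙ i'Y)
    -- the mixed Frobenius laws at `X` and at `Y`
    (mfX : IsIso (mixedFrobMap iX i'X dmX adjDmX))
    (mf'X : IsIso (mixedFrobMap i'X iX dm'X adjDm'X))
    (mfY : IsIso (mixedFrobMap iY i'Y dmY adjDmY))
    (mf'Y : IsIso (mixedFrobMap i'Y iY dm'Y adjDm'Y)) :
    Nonempty
      (((𝟭 MX).prod (jY ⋙ fdot) ⋙ wedge iX dmX ⋙ (iX ⋙ sigf ⋙ dmY)) ≅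
        (((iX ⋙ sigf ⋙ dmY).prod jY) ⋙ wedge iY dmY)) := by
  -- the two relevant adjunctions with right adjoints compared
  let A1 : (dmX ⋙ iX ⋙ sigf ⋙ dmY) ⊣ ((iY ⋙ subf ⋙ sqX) ⋙ iX) :=
    adjDmX.comp (adjSqX.comp (adjSig.comp adjDmY))
  let A2 : (sigf ⋙ dmY) ⊣ (iY ⋙ subf) := adjSig.comp adjDmY
  -- right adjoints are isomorphic, using `compat` and full faithfulness of `iX`
  let u : 𝟭 MX ≅ iX ⋙ sqX := asIso adjSqX.unit
  let rIso : ((iY ⋙ subf ⋙ sqX) ⋙ iX) ≅ iY ⋙ subf :=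
    (Functor.isoWhiskerRight compat.symm (sqX ⋙ iX)).trans <|
      ((Functor.isoWhiskerLeft fdot (Functor.isoWhiskerRight u.symm iX)).trans compat)
  -- hence the left adjoints are isomorphic
  let E : (dmX ⋙ iX ⋙ sigf ⋙ dmY) ≅ (sigf ⋙ dmY) :=
    (A1.ofNatIsoRight rIso).leftAdjointUniq A2
  -- the functor `(M, B) ↦ iX M ⊗ iX (fdot (jY B))`
  let Pre : MX × BY ⥤ PX :=
    (𝟭 MX).prod (jY ⋙ fdot) ⋙ iX.prod iX ⋙ MonoidalCategory.tensor PX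
  -- Step 1: drop the inner reflection
  let s1 : ((𝟭 MX).prod (jY ⋙ fdot) ⋙ wedge iX dmX ⋙ (iX ⋙ sigf ⋙ dmY)) ≅
      Pre ⋙ sigf ⋙ dmY := Functor.isoWhiskerLeft Pre E
  -- Step 2: rewrite the second factor with `compat`
  let s2 : Pre ⋙ sigf ⋙ dmY ≅
      (iX.prod (jY ⋙ iY ⋙ subf) ⋙ MonoidalCategory.tensor PX) ⋙ sigf ⋙ dmY :=
    Functor.isoWhiskerRight
      (Functor.isoWhiskerRight (NatIso.prod (Iso.refl iX) (Functor.isoWhiskerLeft jY compat))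
        (MonoidalCategory.tensor PX)) (sigf ⋙ dmY)
  -- Step 3: Frobenius
  let s3 : (iX.prod (jY ⋙ iY ⋙ subf) ⋙ MonoidalCategory.tensor PX) ⋙ sigf ⋙ dmY ≅
      ((iX ⋙ sigf).prod (jY ⋙ iY) ⋙ MonoidalCategory.tensor PY) ⋙ dmY :=
    Functor.isoWhiskerRight (Functor.isoWhiskerLeft (iX.prod (jY ⋙ iY)) frob.some) dmY
  -- Step 4: rewrite `jY ⋙ iY` as `j'Y ⋙ i'Y`
  let s4 : ((iX ⋙ sigf).prod (jY ⋙ iY) ⋙ MonoidalCategory.tensor PY) ⋙ dmY ≅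
      ((iX ⋙ sigf).prod (j'Y ⋙ i'Y) ⋙ MonoidalCategory.tensor PY) ⋙ dmY :=
    Functor.isoWhiskerRight
      (Functor.isoWhiskerRight (NatIso.prod (Iso.refl (iX ⋙ sigf)) jcomm)
        (MonoidalCategory.tensor PY)) dmY
  -- Step 5: the mixed Frobenius law at `Y`
  let s5 : ((iX ⋙ sigf).prod (j'Y ⋙ i'Y) ⋙ MonoidalCategory.tensor PY) ⋙ dmY ≅
      ((iX ⋙ sigf ⋙ dmY ⋙ iY).prod (j'Y ⋙ i'Y) ⋙ MonoidalCategory.tensor PY) ⋙ dmY :=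
    Functor.isoWhiskerLeft ((iX ⋙ sigf).prod j'Y)
      (asIso (mixedFrobMap iY i'Y dmY adjDmY))
  -- Step 6: rewrite back
  let s6 : ((iX ⋙ sigf ⋙ dmY ⋙ iY).prod (j'Y ⋙ i'Y) ⋙ MonoidalCategory.tensor PY) ⋙ dmY ≅
      (((iX ⋙ sigf ⋙ dmY).prod jY) ⋙ wedge iY dmY) :=
    Functor.isoWhiskerRight
      (Functor.isoWhiskerRight (NatIso.prod (Iso.refl (iX ⋙ sigf ⋙ dmY ⋙ iY)) jcomm.symm)
        (MonoidalCategory.tensor PY)) dmY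
  exact ⟨s1.trans (s2.trans (s3.trans (s4.trans (s5.trans s6))))⟩

end
end

section
/- In a weak temporal doctrine, the Yoneda property holds: for a point x : 1 → X and the slice X/x := ∃_x ⊤_1, there is a natural isomorphism nat_X(X/x, M) ≅ j_1^{-1}(x•M) for M ∈ MX; dually ten_X(x\X, M) ≅ j_1^{-1}(x•M) where x\X := ∃'_x ⊤'_1. -/
noncomputable section

open CategoryTheory CategoryTheory.Limits MonoidalCategory

universe v₂ u₂ v u

namespace CategoryTheory

/-- Old Mathlib's `Exponentiable` (removed): an object with a chosen closed structure. -/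
abbrev Exponentiable {C : Type u} [Category.{v} C] [CartesianMonoidalCategory C] (X : C) :=
  Closed X

/-- Old Mathlib's `exp` (removed): the internal-hom functor of an exponentiable object. -/
abbrev exp {C : Type u} [Category.{v} C] [CartesianMonoidalCategory C] (A : C)
    [Exponentiable A] : C ⥤ C :=
  ihom A

end CategoryTheory

open CartesianClosed MonoidalClosed

/-- The internal-hom bifunctor `(L, M) ↦ (i L ⟹ i M)` defined on a full subcategory
`i : M ⥤ P` of exponentiable objects. -/
@[simps]
def expBifun {M : Type u} [Category.{v} M] {P : Type u₂} [Category.{v₂} P]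
    [CartesianMonoidalCategory P] (i : M ⥤ P) (e : ∀ L : M, Exponentiable (i.obj L)) :
    Mᵒᵖ × M ⥤ P where
  obj LM :=
    letI := e LM.1.unop
    (i.obj LM.1.unop) ⟹ (i.obj LM.2)
  map {A B} fg :=
    letI := e A.1.unop
    letI := e B.1.unop
    (pre (i.map fg.1.unop)).app (i.obj A.2) ≫ (exp (i.obj B.1.unop)).map (i.map fg.2)
  map_id A := by
    letI := e A.1.unop
    simp
  map_comp {A B D} fg fg' := by
    letI := e A.1.unop
    letI := e B.1.unop
    letI := e D.1.unop
    simp only [prod_comp, unop_comp, Functor.map_comp, pre_map, NatTrans.comp_app,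
      Category.assoc]
    rw [(pre (i.map fg'.1.unop)).naturality_assoc]

/-- A weak temporal doctrine: an indexed inclusion
`⟨i_X : M X → P X ← M' X : i'_X ; X ∈ C⟩` of reflective and coreflective subcategories
of "left closed" and "right closed" parts, where the `P X` are cartesian with left and
right closed parts exponentiable, substitution `f*` has a left adjoint `Σ_f` satisfying
the Frobenius law, substitution on closed parts has both adjoints `∃_f ⊣ f• ⊣ ∀_f`
(with `∃_f ≅ ⋄_Y Σ_f i_X`), the mixed Frobenius laws hold, the two projections from the
truth-values category `B 1` are equivalences, and the comprehension adjunction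
`c_X ⊣ k_X` has fully faithful right adjoint. -/
structure WeakTemporalDoctrine (C : Type u) [Category.{v} C] [HasTerminal C] where
  P : C → Type u₂
  M : C → Type u₂
  M' : C → Type u₂
  [catP : ∀ X, Category.{v₂} (P X)]
  [catM : ∀ X, Category.{v₂} (M X)]
  [catM' : ∀ X, Category.{v₂} (M' X)]
  [cfpP : ∀ X, CartesianMonoidalCategory (P X)]
  [termM : ∀ X, HasTerminal (M X)]
  [termM' : ∀ X, HasTerminal (M' X)]
  i : ∀ X, M X ⥤ P X
  i' : ∀ X, M' X ⥤ P X
  [iFull : ∀ X, (i X).Full]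
  [iFaithful : ∀ X, (i X).Faithful]
  [i'Full : ∀ X, (i' X).Full]
  [i'Faithful : ∀ X, (i' X).Faithful]
  expo : ∀ (X) (L : M X), Exponentiable ((i X).obj L)
  expo' : ∀ (X) (N : M' X), Exponentiable ((i' X).obj N)
  dm : ∀ X, P X ⥤ M X
  sq : ∀ X, P X ⥤ M X
  dm' : ∀ X, P X ⥤ M' X
  sq' : ∀ X, P X ⥤ M' X
  dmAdj : ∀ X, dm X ⊣ i X
  sqAdj : ∀ X, i X ⊣ sq X
  dm'Adj : ∀ X, dm' X ⊣ i' X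
  sq'Adj : ∀ X, i' X ⊣ sq' X
  sub : ∀ {X Y : C}, (X ⟶ Y) → (P Y ⥤ P X)
  subId : ∀ X : C, sub (𝟙 X) ≅ 𝟭 (P X)
  subComp : ∀ {X Y Z : C} (f : X ⟶ Y) (g : Y ⟶ Z), sub (f ≫ g) ≅ sub g ⋙ sub f
  msub : ∀ {X Y : C}, (X ⟶ Y) → (M Y ⥤ M X)
  m'sub : ∀ {X Y : C}, (X ⟶ Y) → (M' Y ⥤ M' X)
  mcompat : ∀ {X Y : C} (f : X ⟶ Y), msub f ⋙ i X ≅ i Y ⋙ sub f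
  m'compat : ∀ {X Y : C} (f : X ⟶ Y), m'sub f ⋙ i' X ≅ i' Y ⋙ sub f
  sigma : ∀ {X Y : C}, (X ⟶ Y) → (P X ⥤ P Y)
  sigmaAdj : ∀ {X Y : C} (f : X ⟶ Y), sigma f ⊣ sub f
  frobenius : ∀ {X Y : C} (f : X ⟶ Y),
    Nonempty (((𝟭 (P X)).prod (sub f) ⋙ MonoidalCategory.tensor (P X) ⋙ sigma f) ≅
      ((sigma f).prod (𝟭 (P Y)) ⋙ MonoidalCategory.tensor (P Y)))
  fa : ∀ {X Y : C}, (X ⟶ Y) → (M X ⥤ M Y)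
  faAdj : ∀ {X Y : C} (f : X ⟶ Y), msub f ⊣ fa f
  fa' : ∀ {X Y : C}, (X ⟶ Y) → (M' X ⥤ M' Y)
  fa'Adj : ∀ {X Y : C} (f : X ⟶ Y), m'sub f ⊣ fa' f
  ex : ∀ {X Y : C}, (X ⟶ Y) → (M X ⥤ M Y)
  exAdj : ∀ {X Y : C} (f : X ⟶ Y), ex f ⊣ msub f
  exIso : ∀ {X Y : C} (f : X ⟶ Y), ex f ≅ i X ⋙ sigma f ⋙ dm Y
  ex' : ∀ {X Y : C}, (X ⟶ Y) → (M' X ⥤ M' Y)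
  ex'Adj : ∀ {X Y : C} (f : X ⟶ Y), ex' f ⊣ m'sub f
  ex'Iso : ∀ {X Y : C} (f : X ⟶ Y), ex' f ≅ i' X ⋙ sigma f ⋙ dm' Y
  mixedFrob : ∀ X : C,
    Nonempty (((𝟭 (P X)).prod (i' X) ⋙ MonoidalCategory.tensor (P X) ⋙ dm X) ≅
      ((dm X ⋙ i X).prod (i' X) ⋙ MonoidalCategory.tensor (P X) ⋙ dm X))
  mixedFrob' : ∀ X : C,
    Nonempty (((𝟭 (P X)).prod (i X) ⋙ MonoidalCategory.tensor (P X) ⋙ dm' X) ≅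
      ((dm' X ⋙ i' X).prod (i X) ⋙ MonoidalCategory.tensor (P X) ⋙ dm' X))
  Bone : Type u₂
  [catB : Category.{v₂} Bone]
  j : Bone ⥤ M (⊤_ C)
  j' : Bone ⥤ M' (⊤_ C)
  jcomm : j ⋙ i (⊤_ C) ≅ j' ⋙ i' (⊤_ C)
  [jEquiv : j.IsEquivalence]
  [j'Equiv : j'.IsEquivalence]
  c : ∀ X : C, Over X ⥤ P X
  k : ∀ X : C, P X ⥤ Over X
  compAdj : ∀ X : C, c X ⊣ k X
  cIso : ∀ (X : C) (u : Over X), (c X).obj u ≅ (sigma u.hom).obj (𝟙_ (P u.left))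
  kCounitIso : ∀ X : C, IsIso (compAdj X).counit

namespace WeakTemporalDoctrine

attribute [instance] catP catM catM' cfpP termM termM' iFull iFaithful i'Full i'Faithful
  catB jEquiv j'Equiv

variable {C : Type u} [Category.{v} C] [HasTerminal C]
variable (H : WeakTemporalDoctrine.{v₂, u₂} C)

/-- The internal limit functor `lim_X := j₁⁻¹ ∘ ∀_X : M X ⥤ B 1`. -/
def limF (X : C) : H.M X ⥤ H.Bone := H.fa (terminal.from X) ⋙ H.j.inv

/-- The internal colimit functor `colim_X := j₁⁻¹ ∘ ∃_X : M X ⥤ B 1`. -/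
def colimF (X : C) : H.M X ⥤ H.Bone := H.ex (terminal.from X) ⋙ H.j.inv

/-- The internal colimit functor for right closed parts,
`colim'_X := j'₁⁻¹ ∘ ∃'_X : M' X ⥤ B 1`. -/
def colim'F (X : C) : H.M' X ⥤ H.Bone := H.ex' (terminal.from X) ⋙ H.j'.inv

/-- The end functor `end_X := j₁⁻¹ ∘ ∀_X ∘ □_X : P X ⥤ B 1`. -/
def endF (X : C) : H.P X ⥤ H.Bone := H.sq X ⋙ H.limF X

/-- The coend functor `coend_X := j₁⁻¹ ∘ ∃_X ∘ ⋄_X : P X ⥤ B 1`. -/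
def coendF (X : C) : H.P X ⥤ H.Bone := H.dm X ⋙ H.colimF X

/-- The `B 1`-valued hom `nat_X (L, M) := end_X (i L ⟹ i M)` of `M X`. -/
def natF (X : C) : (H.M X)ᵒᵖ × H.M X ⥤ H.Bone :=
  expBifun (H.i X) (H.expo X) ⋙ H.endF X

/-- The `B 1`-valued tensor `ten_X (N, M) := coend_X (i' N × i M)`. -/
def tenF (X : C) : H.M' X × H.M X ⥤ H.Bone :=
  (H.i' X).prod (H.i X) ⋙ MonoidalCategory.tensor (H.P X) ⋙ H.coendF X

/-- The functor `M ↦ nat_X (L, M)` for a fixed left closed part `L`. -/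
def natWith {X : C} (L : H.M X) : H.M X ⥤ H.Bone :=
  letI := H.expo X L
  H.i X ⋙ exp ((H.i X).obj L) ⋙ H.endF X

/-- The functor `M ↦ ten_X (N, M)` for a fixed right closed part `N`. -/
def tenWith {X : C} (N : H.M' X) : H.M X ⥤ H.Bone :=
  H.i X ⋙ tensorLeft ((H.i' X).obj N) ⋙ H.coendF X

end WeakTemporalDoctrine

namespace Statement18Aux

open WeakTemporalDoctrine CartesianMonoidalCategory

/-- The tensor unit of a category with chosen finite products is terminal. -/
def unitIsTerminal {D : Type u₂} [Category.{v₂} D] [CartesianMonoidalCategory D] :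
    IsTerminal (𝟙_ D) :=
  IsTerminal.ofUniqueHom toUnit fun _ m => toUnit_unique m _

/-- Tensoring with a terminal object is isomorphic to the identity. -/
noncomputable def tensorLeftTerminalIso {D : Type u₂} [Category.{v₂} D]
    [CartesianMonoidalCategory D] {T : D} (hT : IsTerminal T) : tensorLeft T ≅ 𝟭 D :=
  (curriedTensor D).mapIso (hT.uniqueUpToIso unitIsTerminal) ≪≫ leftUnitorNatIso D

variable {C : Type u} [Category.{v} C] [HasTerminal C]
variable (H : WeakTemporalDoctrine.{v₂, u₂} C)

/-- `i ⊤` of the terminal object of `M ⊤` is terminal in `P ⊤`. -/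
noncomputable def isTermT : IsTerminal ((H.i (⊤_ C)).obj (⊤_ (H.M (⊤_ C)))) :=
  IsTerminal.ofUniqueHom
    (fun Q => ((H.dmAdj (⊤_ C)).homEquiv Q _) (terminal.from _))
    (fun Q m => by
      rw [← Equiv.apply_symm_apply ((H.dmAdj (⊤_ C)).homEquiv Q _) m,
        terminal.hom_ext (((H.dmAdj (⊤_ C)).homEquiv Q _).symm m) (terminal.from _)])

/-- `i' ⊤` of the terminal object of `M' ⊤` is terminal in `P ⊤`. -/
noncomputable def isTermT' : IsTerminal ((H.i' (⊤_ C)).obj (⊤_ (H.M' (⊤_ C)))) :=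
  IsTerminal.ofUniqueHom
    (fun Q => ((H.dm'Adj (⊤_ C)).homEquiv Q _) (terminal.from _))
    (fun Q m => by
      rw [← Equiv.apply_symm_apply ((H.dm'Adj (⊤_ C)).homEquiv Q _) m,
        terminal.hom_ext (((H.dm'Adj (⊤_ C)).homEquiv Q _).symm m) (terminal.from _)])

/-- `i ⊤ ≅ j⁻¹ ⋙ j' ⋙ i' ⊤`. -/
noncomputable def iTopIso : H.i (⊤_ C) ≅ H.j.inv ⋙ H.j' ⋙ H.i' (⊤_ C) :=
  (Functor.isoWhiskerRight H.j.asEquivalence.counitIso.symm (H.i (⊤_ C)) ≪≫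
    Functor.isoWhiskerLeft H.j.inv H.jcomm :
      𝟭 _ ⋙ H.i (⊤_ C) ≅ H.j.inv ⋙ H.j' ⋙ H.i' (⊤_ C))

variable {X : C}

/-- Conjugation of `t• ⋙ i` through the right closed parts. -/
noncomputable def conjT :
    H.msub (terminal.from X) ⋙ H.i X ≅
      (H.j.inv ⋙ H.j') ⋙ (H.m'sub (terminal.from X) ⋙ H.i' X) :=
  H.mcompat (terminal.from X) ≪≫
    Functor.isoWhiskerRight (iTopIso H) (H.sub (terminal.from X)) ≪≫
    Functor.isoWhiskerLeft (H.j.inv ⋙ H.j') (H.m'compat (terminal.from X)).symm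

variable (x : ⊤_ C ⟶ X)

/-- `x• ∘ t• ≅ id` on left closed parts. -/
noncomputable def msubCancel : H.msub (terminal.from X) ⋙ H.msub x ≅ 𝟭 (H.M (⊤_ C)) :=
  Functor.fullyFaithfulCancelRight (H.i (⊤_ C))
    ((Functor.isoWhiskerLeft (H.msub (terminal.from X)) (H.mcompat x) ≪≫
      Functor.isoWhiskerRight (H.mcompat (terminal.from X)) (H.sub x) ≪≫
      Functor.isoWhiskerLeft (H.i (⊤_ C)) ((H.subComp x (terminal.from X)).symm ≪≫
        eqToIso (by rw [terminal.hom_ext (x ≫ terminal.from X) (𝟙 (⊤_ C))]) ≪≫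
        H.subId (⊤_ C)) :
      (H.msub (terminal.from X) ⋙ H.msub x) ⋙ H.i (⊤_ C) ≅ 𝟭 _ ⋙ H.i (⊤_ C)))

/-- `x'• ∘ t'• ≅ id` on right closed parts. -/
noncomputable def m'subCancel : H.m'sub (terminal.from X) ⋙ H.m'sub x ≅ 𝟭 (H.M' (⊤_ C)) :=
  Functor.fullyFaithfulCancelRight (H.i' (⊤_ C))
    ((Functor.isoWhiskerLeft (H.m'sub (terminal.from X)) (H.m'compat x) ≪≫
      Functor.isoWhiskerRight (H.m'compat (terminal.from X)) (H.sub x) ≪≫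
      Functor.isoWhiskerLeft (H.i' (⊤_ C)) ((H.subComp x (terminal.from X)).symm ≪≫
        eqToIso (by rw [terminal.hom_ext (x ≫ terminal.from X) (𝟙 (⊤_ C))]) ≪≫
        H.subId (⊤_ C)) :
      (H.m'sub (terminal.from X) ⋙ H.m'sub x) ⋙ H.i' (⊤_ C) ≅ 𝟭 _ ⋙ H.i' (⊤_ C)))

/-- The Frobenius law in the pointed form `Σ_x T ⊗ - ≅ Σ_x ∘ x*` for terminal `T`. -/
noncomputable def tensorLeftSigmaIso {T : H.P (⊤_ C)} (hT : IsTerminal T) :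
    tensorLeft ((H.sigma x).obj T) ≅ H.sub x ⋙ H.sigma x :=
  (NatIso.ofComponents (fun Q => Iso.refl _) (by
      intro Q Q' f
      simp [MonoidalCategory.id_tensorHom]) :
    tensorLeft ((H.sigma x).obj T) ≅
      (((Functor.const (H.P X)).obj T).prod' (𝟭 (H.P X))) ⋙
        ((H.sigma x).prod (𝟭 (H.P X)) ⋙ MonoidalCategory.tensor (H.P X))) ≪≫
  (Functor.isoWhiskerLeft ((((Functor.const (H.P X)).obj T).prod' (𝟭 (H.P X))))
    (H.frobenius x).some).symm ≪≫
  (NatIso.ofComponents (fun Q => Iso.refl _) (by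
      intro Q Q' f
      simp [MonoidalCategory.id_tensorHom]) :
    (((Functor.const (H.P X)).obj T).prod' (𝟭 (H.P X))) ⋙
        ((𝟭 (H.P (⊤_ C))).prod (H.sub x) ⋙ MonoidalCategory.tensor (H.P (⊤_ C)) ⋙
          H.sigma x) ≅
      H.sub x ⋙ tensorLeft T ⋙ H.sigma x) ≪≫
  Functor.isoWhiskerLeft (H.sub x) (Functor.isoWhiskerRight (tensorLeftTerminalIso hT) (H.sigma x))

/-- Mixed Frobenius for the left closed parts, in pointed form: for `P : P X`,
`dm (i (dm P) ⊗ i' -) ≅ dm (P ⊗ i' -)`. -/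
noncomputable def mixedStrip (P : H.P X) :
    H.i' X ⋙ tensorLeft ((H.i X).obj ((H.dm X).obj P)) ⋙ H.dm X ≅
      H.i' X ⋙ tensorLeft P ⋙ H.dm X :=
  (NatIso.ofComponents (fun N => Iso.refl _) (by
      intro N N' f
      simp [MonoidalCategory.id_tensorHom]) :
    H.i' X ⋙ tensorLeft ((H.i X).obj ((H.dm X).obj P)) ⋙ H.dm X ≅
      (((Functor.const (H.M' X)).obj P).prod' (𝟭 (H.M' X))) ⋙
        ((H.dm X ⋙ H.i X).prod (H.i' X) ⋙ MonoidalCategory.tensor (H.P X) ⋙ H.dm X)) ≪≫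
  (Functor.isoWhiskerLeft (((Functor.const (H.M' X)).obj P).prod' (𝟭 (H.M' X)))
    (H.mixedFrob X).some).symm ≪≫
  (NatIso.ofComponents (fun N => Iso.refl _) (by
      intro N N' f
      simp [MonoidalCategory.id_tensorHom]) :
    (((Functor.const (H.M' X)).obj P).prod' (𝟭 (H.M' X))) ⋙
        ((𝟭 (H.P X)).prod (H.i' X) ⋙ MonoidalCategory.tensor (H.P X) ⋙ H.dm X) ≅
      H.i' X ⋙ tensorLeft P ⋙ H.dm X)

/-- Mixed Frobenius for the right closed parts, in pointed form: for `P : P X`,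
`dm' (i' (dm' P) ⊗ i -) ≅ dm' (P ⊗ i -)`. -/
noncomputable def mixedStrip' (P : H.P X) :
    H.i X ⋙ tensorLeft ((H.i' X).obj ((H.dm' X).obj P)) ⋙ H.dm' X ≅
      H.i X ⋙ tensorLeft P ⋙ H.dm' X :=
  (NatIso.ofComponents (fun A => Iso.refl _) (by
      intro A A' f
      simp [MonoidalCategory.id_tensorHom]) :
    H.i X ⋙ tensorLeft ((H.i' X).obj ((H.dm' X).obj P)) ⋙ H.dm' X ≅
      (((Functor.const (H.M X)).obj P).prod' (𝟭 (H.M X))) ⋙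
        ((H.dm' X ⋙ H.i' X).prod (H.i X) ⋙ MonoidalCategory.tensor (H.P X) ⋙ H.dm' X)) ≪≫
  (Functor.isoWhiskerLeft (((Functor.const (H.M X)).obj P).prod' (𝟭 (H.M X)))
    (H.mixedFrob' X).some).symm ≪≫
  (NatIso.ofComponents (fun A => Iso.refl _) (by
      intro A A' f
      simp [MonoidalCategory.id_tensorHom]) :
    (((Functor.const (H.M X)).obj P).prod' (𝟭 (H.M X))) ⋙
        ((𝟭 (H.P X)).prod (H.i X) ⋙ MonoidalCategory.tensor (H.P X) ⋙ H.dm' X) ≅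
      H.i X ⋙ tensorLeft P ⋙ H.dm' X)

/-- The key isomorphism for the `nat` part: the left adjoint of
`nat_X (X/x, -)` is isomorphic to `∃_x : M ⊤ ⥤ M X`. -/
noncomputable def natLeftIso :
    H.msub (terminal.from X) ⋙ H.i X ⋙
        tensorLeft ((H.i X).obj ((H.ex x).obj (⊤_ (H.M (⊤_ C))))) ⋙ H.dm X ≅
      H.ex x :=
  Functor.isoWhiskerLeft (H.msub (terminal.from X) ⋙ H.i X)
    (Functor.isoWhiskerRight
      ((curriedTensor (H.P X)).mapIso ((H.i X).mapIso ((H.exIso x).app (⊤_ (H.M (⊤_ C))))))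
      (H.dm X)) ≪≫
  (Functor.isoWhiskerRight (conjT H)
    (tensorLeft ((H.i X).obj ((H.dm X).obj
      ((H.sigma x).obj ((H.i (⊤_ C)).obj (⊤_ (H.M (⊤_ C))))))) ⋙ H.dm X)) ≪≫
  Functor.isoWhiskerLeft (H.j.inv ⋙ H.j' ⋙ H.m'sub (terminal.from X))
    (mixedStrip H ((H.sigma x).obj ((H.i (⊤_ C)).obj (⊤_ (H.M (⊤_ C)))))) ≪≫
  (Functor.isoWhiskerRight (conjT H)
    (tensorLeft ((H.sigma x).obj ((H.i (⊤_ C)).obj (⊤_ (H.M (⊤_ C))))) ⋙ H.dm X)).symm ≪≫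
  Functor.isoWhiskerLeft (H.msub (terminal.from X) ⋙ H.i X)
    (Functor.isoWhiskerRight (tensorLeftSigmaIso H x (isTermT H)) (H.dm X)) ≪≫
  Functor.isoWhiskerLeft (H.msub (terminal.from X))
    (Functor.isoWhiskerRight (H.mcompat x).symm (H.sigma x ⋙ H.dm X)) ≪≫
  Functor.isoWhiskerRight (msubCancel H x) (H.i (⊤_ C) ⋙ H.sigma x ⋙ H.dm X) ≪≫
  (H.exIso x).symm

/-- The key isomorphism for the `ten` part: the functor `M ↦ ⋄(i' (x∖X) × i M)`
is isomorphic to `x• ⋙ j⁻¹ ⋙ j' ⋙ ∃'_x`. -/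
noncomputable def tenLeftIso :
    H.i X ⋙ tensorLeft ((H.i' X).obj ((H.ex' x).obj (⊤_ (H.M' (⊤_ C))))) ⋙ H.dm' X ≅
      (H.msub x ⋙ H.j.inv ⋙ H.j') ⋙ H.ex' x :=
  Functor.isoWhiskerLeft (H.i X)
    (Functor.isoWhiskerRight
      ((curriedTensor (H.P X)).mapIso
        ((H.i' X).mapIso ((H.ex'Iso x).app (⊤_ (H.M' (⊤_ C))))))
      (H.dm' X)) ≪≫
  mixedStrip' H ((H.sigma x).obj ((H.i' (⊤_ C)).obj (⊤_ (H.M' (⊤_ C))))) ≪≫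
  Functor.isoWhiskerLeft (H.i X)
    (Functor.isoWhiskerRight (tensorLeftSigmaIso H x (isTermT' H)) (H.dm' X)) ≪≫
  Functor.isoWhiskerRight (H.mcompat x).symm (H.sigma x ⋙ H.dm' X) ≪≫
  Functor.isoWhiskerLeft (H.msub x) (Functor.isoWhiskerRight (iTopIso H) (H.sigma x ⋙ H.dm' X)) ≪≫
  Functor.isoWhiskerLeft (H.msub x ⋙ H.j.inv ⋙ H.j') (H.ex'Iso x).symm

end Statement18Aux

open WeakTemporalDoctrine in
/-- In a weak temporal doctrine, the Yoneda property holds: for a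
point `x : 1 ⟶ X` with slices `X/x := ∃_x ⊤₁` and `x∖X := ∃'_x ⊤'₁`, there are natural
isomorphisms `nat_X (X/x, M) ≅ j₁⁻¹ (x• M)` and `ten_X (x∖X, M) ≅ j₁⁻¹ (x• M)`. -/
theorem statement18 {C : Type u} [Category.{v} C] [HasTerminal C]
    (H : WeakTemporalDoctrine.{v₂, u₂} C) {X : C} (x : ⊤_ C ⟶ X) :
    Nonempty (H.natWith ((H.ex x).obj (⊤_ (H.M (⊤_ C)))) ≅ (H.msub x ⋙ H.j.inv)) ∧
    Nonempty (H.tenWith ((H.ex' x).obj (⊤_ (H.M' (⊤_ C)))) ≅ (H.msub x ⋙ H.j.inv)) := by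
  constructor
  · -- the `nat` part
    letI : Exponentiable ((H.i X).obj ((H.ex x).obj (⊤_ (H.M (⊤_ C))))) :=
      H.expo X ((H.ex x).obj (⊤_ (H.M (⊤_ C))))
    have adjNat : (H.j ⋙ H.msub (terminal.from X) ⋙ H.i X ⋙
        tensorLeft ((H.i X).obj ((H.ex x).obj (⊤_ (H.M (⊤_ C))))) ⋙ H.dm X) ⊣
          H.natWith ((H.ex x).obj (⊤_ (H.M (⊤_ C)))) :=
      H.j.asEquivalence.toAdjunction.comp ((H.faAdj (terminal.from X)).comp
        ((H.sqAdj X).comp ((ihom.adjunction _).comp (H.dmAdj X))))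
    exact ⟨Adjunction.rightAdjointUniq
      (adjNat.ofNatIsoLeft (Functor.isoWhiskerLeft H.j (Statement18Aux.natLeftIso H x)))
      (H.j.asEquivalence.toAdjunction.comp (H.exAdj x))⟩
  · -- the `ten` part
    letI : Exponentiable ((H.i' X).obj ((H.ex' x).obj (⊤_ (H.M' (⊤_ C))))) :=
      H.expo' X ((H.ex' x).obj (⊤_ (H.M' (⊤_ C))))
    have adjA : (H.i X ⋙ tensorLeft ((H.i' X).obj ((H.ex' x).obj (⊤_ (H.M' (⊤_ C))))) ⋙
        H.dm' X) ⊣ (H.i' X ⋙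
          exp ((H.i' X).obj ((H.ex' x).obj (⊤_ (H.M' (⊤_ C))))) ⋙ H.sq X) :=
      (H.sqAdj X).comp ((ihom.adjunction _).comp (H.dm'Adj X))
    have star : (H.i' X ⋙
        exp ((H.i' X).obj ((H.ex' x).obj (⊤_ (H.M' (⊤_ C))))) ⋙ H.sq X) ≅
          (H.m'sub x ⋙ H.j'.inv ⋙ H.j ⋙ H.fa x) :=
      Adjunction.rightAdjointUniq
        (adjA.ofNatIsoLeft (Statement18Aux.tenLeftIso H x))
        ((H.faAdj x).comp (H.j.asEquivalence.symm.toAdjunction.comp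
          (H.j'.asEquivalence.toAdjunction.comp (H.ex'Adj x))))
    have tr : (H.msub (terminal.from X) ⋙ H.i X ⋙
        exp ((H.i' X).obj ((H.ex' x).obj (⊤_ (H.M' (⊤_ C))))) ⋙ H.sq X) ≅ H.fa x :=
      Functor.isoWhiskerRight (Statement18Aux.conjT H)
        (exp ((H.i' X).obj ((H.ex' x).obj (⊤_ (H.M' (⊤_ C))))) ⋙ H.sq X) ≪≫
      Functor.isoWhiskerLeft (H.j.inv ⋙ H.j' ⋙ H.m'sub (terminal.from X)) star ≪≫
      Functor.isoWhiskerLeft (H.j.inv ⋙ H.j')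
        (Functor.isoWhiskerRight (Statement18Aux.m'subCancel H x) (H.j'.inv ⋙ H.j ⋙ H.fa x)) ≪≫
      Functor.isoWhiskerLeft H.j.inv
        (Functor.isoWhiskerRight H.j'.asEquivalence.unitIso.symm (H.j ⋙ H.fa x)) ≪≫
      Functor.isoWhiskerRight H.j.asEquivalence.counitIso (H.fa x)
    have adjTen : H.tenWith ((H.ex' x).obj (⊤_ (H.M' (⊤_ C)))) ⊣
        (H.j ⋙ H.msub (terminal.from X) ⋙ H.i X ⋙
          exp ((H.i' X).obj ((H.ex' x).obj (⊤_ (H.M' (⊤_ C))))) ⋙ H.sq X) :=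
      (H.sqAdj X).comp ((ihom.adjunction _).comp ((H.dmAdj X).comp
        ((H.exAdj (terminal.from X)).comp H.j.asEquivalence.symm.toAdjunction)))
    exact ⟨Adjunction.leftAdjointUniq
      (adjTen.ofNatIsoRight (Functor.isoWhiskerLeft H.j tr))
      ((H.faAdj x).comp H.j.asEquivalence.symm.toAdjunction)⟩
end
end
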